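/- Let X = {x_1, …, x_k} ⊂ ℝ^d be a finite set of points. If v, w ∈ S^{d−1} lie in the same connected component of Σ(X), then there exists an order-preserving bijection (order isomorphism, hence a homeomorphism) φ : ℝ → ℝ such that φ(⟨v, x⟩) = ⟨w, x⟩ for every x ∈ X. -/

import Mathlib

open scoped RealInnerProductSpace

/-- The union of equalizer hyperspheres `W(X) ⊆ S^{d-1}` for a family of points
`x : Fin k → ℝ^d`. -/
def hyperplaneUnion {d k : ℕ} (x : Fin k → EuclideanSpace ℝ (Fin d)) :
    Set (EuclideanSpace ℝ (Fin d)) :=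
  ⋃ (i : Fin k) (j : Fin k) (_ : i ≠ j),
    {v ∈ Metric.sphere (0 : EuclideanSpace ℝ (Fin d)) 1 | ⟪v, x i⟫ = ⟪v, x j⟫}

/-- `Σ(X) = S^{d-1} \ W(X)`. -/
def sigmaSet {d k : ℕ} (x : Fin k → EuclideanSpace ℝ (Fin d)) :
    Set (EuclideanSpace ℝ (Fin d)) :=
  Metric.sphere (0 : EuclideanSpace ℝ (Fin d)) 1 \ hyperplaneUnion x

/-!
On `Σ(X)` no two of the continuous functions `v ↦ ⟨v, x_i⟩` coincide, so by the intermediate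
value theorem their relative order is constant on each connected component.
It remains to realise an order-preserving correspondence between two finite subsets of `ℝ` by
an order automorphism of `ℝ`: inserting the points in increasing order, each new point is moved
to its target by a piecewise-linear map which is the identity below all the points placed so far.
-/

section OrderIsoExtension

variable {K : Type*} [Field K] [LinearOrder K] [IsStrictOrderedRing K]

def bend (p s : K) (t : K) : K := min t p + s * max (t - p) 0

lemma bend_of_le {p s t : K} (h : t ≤ p) : bend p s t = t := by
  simp [bend, min_eq_left h, max_eq_right (sub_nonpos.mpr h)]

lemma bend_of_ge {p s t : K} (h : p ≤ t) : bend p s t = p + s * (t - p) := by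
  simp [bend, min_eq_right h, max_eq_left (sub_nonneg.mpr h)]

lemma strictMono_bend {p s : K} (hs : 0 < s) : StrictMono (bend p s) := by
  intro t t' htt'
  rcases le_total t' p with ht' | ht'
  · rw [bend_of_le (htt'.le.trans ht'), bend_of_le ht']
    exact htt'
  rcases le_total p t with ht | ht
  · rw [bend_of_ge ht, bend_of_ge (ht.trans htt'.le)]
    nlinarith
  · rw [bend_of_le ht, bend_of_ge ht']
    nlinarith [mul_nonneg hs.le (sub_nonneg.mpr ht')]

lemma bend_inv_bend {p s : K} (hs : 0 < s) (t : K) : bend p s⁻¹ (bend p s t) = t := by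
  rcases le_total t p with ht | ht
  · rw [bend_of_le ht, bend_of_le ht]
  · rw [bend_of_ge ht, bend_of_ge (by nlinarith [mul_nonneg hs.le (sub_nonneg.mpr ht)])]
    field_simp
    ring

noncomputable def bendOrderIso (p s : K) (hs : 0 < s) : K ≃o K :=
  StrictMono.orderIsoOfSurjective _ (strictMono_bend hs) fun t =>
    ⟨bend p s⁻¹ t, by simpa only [inv_inv] using bend_inv_bend (p := p) (inv_pos.mpr hs) t⟩

lemma bendOrderIso_apply (p s : K) (hs : 0 < s) (t : K) : bendOrderIso p s hs t = bend p s t :=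
  rfl

lemma exists_orderIso_fixing_apply_eq (S : Finset K) {c c' : K} (hc : ∀ t ∈ S, t < c)
    (hc' : ∀ t ∈ S, t < c') : ∃ ψ : K ≃o K, (∀ t ∈ S, ψ t = t) ∧ ψ c = c' := by
  set p := (insert (min c c' - 1) S).max' (Finset.insert_nonempty _ _)
  have hp : p < min c c' := by
    refine (Finset.max'_lt_iff _ _).mpr fun t ht => ?_
    rcases Finset.mem_insert.mp ht with rfl | ht
    · linarith
    · exact lt_min (hc t ht) (hc' t ht)
  have hpc : p < c := hp.trans_le (min_le_left c c')
  have hpc' : p < c' := hp.trans_le (min_le_right c c')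
  have hs : 0 < (c' - p) / (c - p) := div_pos (by linarith) (by linarith)
  refine ⟨bendOrderIso p _ hs, fun t ht => bend_of_le ?_, ?_⟩
  · exact Finset.le_max' _ _ (Finset.mem_insert_of_mem ht)
  · rw [bendOrderIso_apply, bend_of_ge hpc.le, div_mul_cancel₀ _ (sub_ne_zero.mpr hpc.ne')]
    ring

lemma exists_orderIso_apply_eq_on_finset_of_lt_iff_lt {ι : Type*} {a b : ι → K}
    (hab : ∀ i j, a i < a j ↔ b i < b j) (s : Finset ι) :
    ∃ φ : K ≃o K, ∀ i ∈ s, φ (a i) = b i := by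
  classical
  induction s using Finset.induction_on_max_value a with
  | empty => exact ⟨OrderIso.refl K, by simp⟩
  | insert i s _ hmax ih =>
    obtain ⟨φ, hφ⟩ := ih
    by_cases htie : ∃ j ∈ s, a j = a i
    · obtain ⟨j, hj, hji⟩ := htie
      have hbji : b j = b i :=
        le_antisymm (not_lt.mp fun h => ((hab i j).mpr h).ne' hji)
          (not_lt.mp fun h => ((hab j i).mpr h).ne hji)
      refine ⟨φ, (Finset.forall_mem_insert _ _ _).mpr ⟨?_, hφ⟩⟩
      rw [← hji, hφ j hj, hbji]
    push Not at htie
    have hlt : ∀ j ∈ s, a j < a i := fun j hj => (hmax j hj).lt_of_ne (htie j hj)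
    obtain ⟨ψ, hψS, hψ⟩ := exists_orderIso_fixing_apply_eq (s.image b) (c := φ (a i)) (c' := b i)
      (fun t ht => by
        obtain ⟨j, hj, rfl⟩ := Finset.mem_image.mp ht
        exact hφ j hj ▸ φ.strictMono (hlt j hj))
      (fun t ht => by
        obtain ⟨j, hj, rfl⟩ := Finset.mem_image.mp ht
        exact (hab j i).mp (hlt j hj))
    refine ⟨φ.trans ψ, (Finset.forall_mem_insert _ _ _).mpr ⟨hψ, fun j hj => ?_⟩⟩
    rw [OrderIso.trans_apply, hφ j hj, hψS _ (Finset.mem_image_of_mem b hj)]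

theorem exists_orderIso_apply_eq_of_lt_iff_lt {ι : Type*} [Finite ι] {a b : ι → K}
    (hab : ∀ i j, a i < a j ↔ b i < b j) : ∃ φ : K ≃o K, ∀ i, φ (a i) = b i := by
  have := Fintype.ofFinite ι
  simpa using exists_orderIso_apply_eq_on_finset_of_lt_iff_lt hab Finset.univ

end OrderIsoExtension

lemma IsPreconnected.lt_iff_lt_of_ne {X α : Type*} [TopologicalSpace X] [LinearOrder α]
    [TopologicalSpace α] [OrderClosedTopology α] {s : Set X} (hs : IsPreconnected s)
    {f g : X → α} (hf : ContinuousOn f s) (hg : ContinuousOn g s) (hfg : ∀ u ∈ s, f u ≠ g u)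
    {v w : X} (hv : v ∈ s) (hw : w ∈ s) : f v < g v ↔ f w < g w := by
  suffices key : ∀ {v w}, v ∈ s → w ∈ s → f v < g v → f w < g w from ⟨key hv hw, key hw hv⟩
  intro v w hv hw hlt
  by_contra hge
  obtain ⟨u, hu, hfgu⟩ := hs.intermediate_value₂ hv hw hf hg hlt.le (not_lt.mp hge)
  exact hfg u hu hfgu

lemma inner_ne_of_mem_sigmaSet {d k : ℕ} {x : Fin k → EuclideanSpace ℝ (Fin d)}
    {v : EuclideanSpace ℝ (Fin d)} (hv : v ∈ sigmaSet x) {i j : Fin k} (hij : i ≠ j) :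
    ⟪v, x i⟫ ≠ ⟪v, x j⟫ := fun h =>
  hv.2 (Set.mem_iUnion₂.mpr ⟨i, j, Set.mem_iUnion.mpr ⟨hij, hv.1, h⟩⟩)

theorem stmt3_general {d k : ℕ} (x : Fin k → EuclideanSpace ℝ (Fin d))
    (v w : EuclideanSpace ℝ (Fin d))
    (hw : w ∈ connectedComponentIn (sigmaSet x) v) :
    ∃ φ : ℝ ≃o ℝ, ∀ i : Fin k, φ ⟪v, x i⟫ = ⟪w, x i⟫ := by
  set C := connectedComponentIn (sigmaSet x) v
  have hv : v ∈ C := mem_connectedComponentIn (connectedComponentIn_nonempty_iff.mp ⟨w, hw⟩)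
  refine exists_orderIso_apply_eq_of_lt_iff_lt fun i j => ?_
  rcases eq_or_ne i j with rfl | hij
  · simp
  have hcont : ∀ y : EuclideanSpace ℝ (Fin d), ContinuousOn (⟪·, y⟫) C := fun y =>
    (continuous_id.inner continuous_const).continuousOn
  exact isPreconnected_connectedComponentIn.lt_iff_lt_of_ne (hcont _) (hcont _)
    (fun u hu => inner_ne_of_mem_sigmaSet (connectedComponentIn_subset _ _ hu) hij) hv hw

/-- if `v, w` lie in the same connected component of `Σ(X)`, then there is an
order-preserving bijection `φ : ℝ ≃o ℝ` with `φ ⟨v, x i⟩ = ⟨w, x i⟩` for every `i`. -/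
theorem stmt3 {d k : ℕ} (x : Fin k → EuclideanSpace ℝ (Fin d))
    (v w : EuclideanSpace ℝ (Fin d))
    (hv : v ∈ sigmaSet x)
    (hw : w ∈ connectedComponentIn (sigmaSet x) v) :
    ∃ φ : ℝ ≃o ℝ, ∀ i : Fin k, φ ⟪v, x i⟫ = ⟪w, x i⟫ :=
  stmt3_general x v w hw
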